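/- arXiv:2103.13249 — 7 statements merged into one kernel-verified Lean document; each statement's English description precedes it below -/
import Mathlib

section
/- Let N be a positive integer and for each n set Z_n = ∑_{k=0}^{n} 1/(2k+1)² and q_n = ∑_{k=0}^{n} (−1)^k/(2k+1). Then the sequence y_N := Z_N − q_N² converges to π²/16 as N → ∞. -/
/-!
The odd squares carry `3/4` of `ζ(2) = π²/6`, since the even ones carry `ζ(2)/4`; so `Z_N → π²/8`,
while `q_N → π/4` by Leibniz, and `y_N = Z_N - q_N² → π²/8 - π²/16`.
-/

open Filter Real

theorem HasSum.hasSum_odd_of_hasSum_even {G : Type*} [AddCommGroup G] [UniformSpace G]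
    [IsUniformAddGroup G] [CompleteSpace G] [T2Space G] {f : ℕ → G} {a b : G}
    (hf : HasSum f a) (heven : HasSum (fun k ↦ f (2 * k)) b) :
    HasSum (fun k ↦ f (2 * k + 1)) (a - b) := by
  have hinj : Function.Injective (fun k : ℕ ↦ 2 * k + 1) := fun m n h ↦ by simpa using h
  obtain ⟨c, hodd⟩ := hf.summable.comp_injective hinj
  have hc : c = a - b := eq_sub_of_add_eq' ((heven.even_add_odd hodd).unique hf)
  exact hc ▸ hodd

theorem hasSum_one_div_odd_sq :
    HasSum (fun k : ℕ ↦ (1 : ℝ) / (2 * (k : ℝ) + 1) ^ 2) (π ^ 2 / 8) := by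
  -- `hasSum_zeta_two` includes the junk term `1 / 0 ^ 2 = 0`, matching `k = 0` here.
  have heven : HasSum (fun k : ℕ ↦ (1 : ℝ) / ((2 * k : ℕ) : ℝ) ^ 2) (π ^ 2 / 24) := by
    convert! hasSum_zeta_two.mul_left (1 / 4) using 1
    · funext k
      push_cast
      ring
    · ring
  convert! hasSum_zeta_two.hasSum_odd_of_hasSum_even heven using 1
  · funext k
    push_cast
    ring
  · ring

theorem bernoulli_decomposition_tendsto :
    Filter.Tendsto
      (fun N : ℕ =>
        (∑ k ∈ Finset.range (N + 1), (1 : ℝ) / (2 * (k : ℝ) + 1) ^ 2) -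
          (∑ k ∈ Finset.range (N + 1), (-1 : ℝ) ^ k / (2 * (k : ℝ) + 1)) ^ 2)
      Filter.atTop (nhds (Real.pi ^ 2 / 16)) := by
  have hZ := hasSum_one_div_odd_sq.tendsto_sum_nat.comp (tendsto_add_atTop_nat 1)
  have hq := tendsto_sum_pi_div_four.comp (tendsto_add_atTop_nat 1)
  rw [show π ^ 2 / 16 = π ^ 2 / 8 - (π / 4) ^ 2 by ring]
  exact hZ.sub (hq.pow 2)
end

section
/- Let N be a positive integer and for each n set Z_n = ∑_{k=0}^{n} 1/(2k+1)² and q_n = ∑_{k=0}^{n} (−1)^k/(2k+1). Then lim_{N→∞} (Z_N − 2q_N²) = 0. -/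
open Filter Real

lemma hasSum_odd_sq : HasSum (fun k : ℕ => (1 : ℝ) / (2 * (k : ℝ) + 1) ^ 2) (π ^ 2 / 8) := by
  have hS := hasSum_zeta_two
  have heven : HasSum (fun k : ℕ => (1 : ℝ) / ((2 * k : ℕ) : ℝ) ^ 2) (π ^ 2 / 24) := by
    have h := hS.mul_left (1 / 4)
    have hv : (1 / 4 : ℝ) * (π ^ 2 / 6) = π ^ 2 / 24 := by ring
    rw [hv] at h
    convert h using 1
    case e'_3 => rfl
    funext k; push_cast; ring
  have hinj : Function.Injective (fun k : ℕ => 2 * k + 1) := by intro a b h; dsimp at h; omega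
  have hsummodd : Summable (fun k : ℕ => (1 : ℝ) / ((2 * k + 1 : ℕ) : ℝ) ^ 2) :=
    hS.summable.comp_injective hinj
  obtain ⟨t, ht⟩ := hsummodd
  have htot := HasSum.even_add_odd (f := fun n : ℕ => (1 : ℝ) / (n : ℝ) ^ 2) heven ht
  have heq : π ^ 2 / 24 + t = π ^ 2 / 6 := htot.unique hS
  have ht8 : t = π ^ 2 / 8 := by linarith
  rw [ht8] at ht
  convert ht using 1
  funext k; push_cast; ring

theorem estermann_decomposition_tendsto :
    Filter.Tendsto
      (fun N : ℕ =>
        (∑ k ∈ Finset.range (N + 1), (1 : ℝ) / (2 * (k : ℝ) + 1) ^ 2) -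
          2 * (∑ k ∈ Finset.range (N + 1), (-1 : ℝ) ^ k / (2 * (k : ℝ) + 1)) ^ 2)
      Filter.atTop (nhds 0) := by
  have hZ : Filter.Tendsto
      (fun N : ℕ => ∑ k ∈ Finset.range (N + 1), (1 : ℝ) / (2 * (k : ℝ) + 1) ^ 2)
      atTop (nhds (π ^ 2 / 8)) :=
    hasSum_odd_sq.tendsto_sum_nat.comp (tendsto_add_atTop_nat 1)
  have hq : Filter.Tendsto
      (fun N : ℕ => ∑ k ∈ Finset.range (N + 1), (-1 : ℝ) ^ k / (2 * (k : ℝ) + 1))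
      atTop (nhds (π / 4)) :=
    Real.tendsto_sum_pi_div_four.comp (tendsto_add_atTop_nat 1)
  have h := hZ.sub ((hq.pow 2).const_mul 2)
  convert h using 2
  ring
end

section
/- For every positive integer j and every t ∈ [0,1], the function f_j^μ(t) = √2·cos(jπt) is an eigenfunction of the kernel k^μ(s,t) = min(s,t) − (s+t) + (1/2)(s²+t²) + 1/3 with eigenvalue λ_j^μ = j²π², in the sense that f_j^μ(t) = λ_j^μ · ∫_0^1 k^μ(s,t)·f_j^μ(s) ds. -/
/-! Write `k^μ(s, t) = min(s, t) + (s²/2 - s) + (t²/2 - t + 1/3)`. Against `cos (a s)` with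
`sin a = 0`, the last summand integrates to `0`, the middle one to `1/a²`, and `min(s, t)` to
`(cos (a t) - 1)/a²`; so `∫₀¹ k^μ(s, t) cos (a s) ds = cos (a t)/a²`, and `a = jπ` gives the theorem. -/

open Real Set intervalIntegral

noncomputable def demeanedWienerKernel (s t : ℝ) : ℝ :=
  min s t - (s + t) + (1 / 2) * (s ^ 2 + t ^ 2) + 1 / 3

theorem hasDerivAt_sin_mul (a x : ℝ) : HasDerivAt (fun s => sin (a * s)) (a * cos (a * x)) x := by
  simpa [mul_comm] using ((hasDerivAt_id x).const_mul a).sin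

theorem hasDerivAt_cos_mul (a x : ℝ) :
    HasDerivAt (fun s => cos (a * s)) (-(a * sin (a * x))) x := by
  simpa [mul_comm] using ((hasDerivAt_id x).const_mul a).cos

section CosMul

variable {a : ℝ}

theorem integral_cos_mul (ha : a ≠ 0) (x y : ℝ) :
    ∫ s in x..y, cos (a * s) = (sin (a * y) - sin (a * x)) / a := by
  rw [integral_comp_mul_left (fun s => cos s) ha, integral_cos, smul_eq_mul, inv_mul_eq_div]

theorem integral_mul_cos_mul (ha : a ≠ 0) (x : ℝ) :
    ∫ s in (0 : ℝ)..x, s * cos (a * s) = x * sin (a * x) / a + (cos (a * x) - 1) / a ^ 2 := by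
  have hderiv : ∀ s ∈ uIcc 0 x, HasDerivAt (fun s => s * sin (a * s) / a + cos (a * s) / a ^ 2)
      (s * cos (a * s)) s := fun s _ => by
    refine ((((hasDerivAt_id' s).mul (hasDerivAt_sin_mul a s)).div_const a).add
      ((hasDerivAt_cos_mul a s).div_const (a ^ 2))).congr_deriv ?_
    field_simp
    ring
  rw [integral_eq_sub_of_hasDerivAt hderiv ((by fun_prop : Continuous _).intervalIntegrable _ _)]
  simp only [mul_zero, sin_zero, cos_zero, zero_div, zero_add]
  ring

theorem integral_min_mul_cos_mul (ha : a ≠ 0) (hsin : sin a = 0) {t : ℝ} (ht : t ∈ Icc (0 : ℝ) 1) :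
    ∫ s in (0 : ℝ)..1, min s t * cos (a * s) = (cos (a * t) - 1) / a ^ 2 := by
  have hcont : Continuous fun s => min s t * cos (a * s) := by fun_prop
  rw [← integral_add_adjacent_intervals (hcont.intervalIntegrable 0 t)
    (hcont.intervalIntegrable t 1)]
  have hleft : ∫ s in (0 : ℝ)..t, min s t * cos (a * s) = ∫ s in (0 : ℝ)..t, s * cos (a * s) :=
    integral_congr fun s hs => by rw [min_eq_left (uIcc_of_le ht.1 ▸ hs).2]
  have hright : ∫ s in t..1, min s t * cos (a * s) = ∫ s in t..1, t * cos (a * s) :=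
    integral_congr fun s hs => by rw [min_eq_right (uIcc_of_le ht.2 ▸ hs).1]
  rw [hleft, hright, integral_mul_cos_mul ha, integral_const_mul, integral_cos_mul ha, mul_one,
    hsin]
  field_simp
  ring

theorem integral_sq_half_sub_mul_cos_mul (ha : a ≠ 0) (hsin : sin a = 0) :
    ∫ s in (0 : ℝ)..1, (s ^ 2 / 2 - s) * cos (a * s) = 1 / a ^ 2 := by
  have hderiv : ∀ s ∈ uIcc (0 : ℝ) 1, HasDerivAt
      (fun s => (s ^ 2 / 2 - s) * sin (a * s) / a + (s - 1) * cos (a * s) / a ^ 2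
        - sin (a * s) / a ^ 3) ((s ^ 2 / 2 - s) * cos (a * s)) s := fun s _ => by
    have hpoly : HasDerivAt (fun s : ℝ => s ^ 2 / 2 - s) (s - 1) s := by
      refine (((hasDerivAt_pow 2 s).div_const 2).sub (hasDerivAt_id' s)).congr_deriv ?_
      push_cast
      ring
    refine (((hpoly.mul (hasDerivAt_sin_mul a s)).div_const a).add
      ((((hasDerivAt_id' s).sub_const 1).mul (hasDerivAt_cos_mul a s)).div_const (a ^ 2)) |>.sub
      ((hasDerivAt_sin_mul a s).div_const (a ^ 3))).congr_deriv ?_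
    field_simp
    ring
  rw [integral_eq_sub_of_hasDerivAt hderiv ((by fun_prop : Continuous _).intervalIntegrable _ _)]
  simp only [mul_zero, mul_one, sin_zero, cos_zero, hsin]
  field_simp
  ring

theorem integral_demeanedWienerKernel_mul_cos_mul (ha : a ≠ 0) (hsin : sin a = 0) {t : ℝ}
    (ht : t ∈ Icc (0 : ℝ) 1) :
    ∫ s in (0 : ℝ)..1, demeanedWienerKernel s t * cos (a * s) = cos (a * t) / a ^ 2 := by
  have hsplit : (fun s => demeanedWienerKernel s t * cos (a * s)) = fun s =>
      (min s t * cos (a * s) + (s ^ 2 / 2 - s) * cos (a * s))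
        + (t ^ 2 / 2 - t + 1 / 3) * cos (a * s) := by
    ext s
    simp only [demeanedWienerKernel]
    ring
  have hint {f : ℝ → ℝ} (hf : Continuous f) : IntervalIntegrable f MeasureTheory.volume 0 1 :=
    hf.intervalIntegrable 0 1
  rw [hsplit, integral_add (hint (by fun_prop)) (hint (by fun_prop)),
    integral_add (hint (by fun_prop)) (hint (by fun_prop)), integral_const_mul,
    integral_min_mul_cos_mul ha hsin ht, integral_sq_half_sub_mul_cos_mul ha hsin,
    integral_cos_mul ha, mul_zero, mul_one, hsin, sin_zero]
  field_simp
  ring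

end CosMul

theorem demeaned_wiener_kernel_eigenfunction (j : ℕ) (hj : 0 < j) (t : ℝ)
    (ht : t ∈ Set.Icc (0 : ℝ) 1) :
    Real.sqrt 2 * Real.cos ((j : ℝ) * Real.pi * t) =
      (j : ℝ) ^ 2 * Real.pi ^ 2 *
        ∫ s in (0 : ℝ)..1,
          (min s t - (s + t) + (1 / 2) * (s ^ 2 + t ^ 2) + 1 / 3) *
            (Real.sqrt 2 * Real.cos ((j : ℝ) * Real.pi * s)) := by
  have ha : (j : ℝ) * π ≠ 0 := by positivity
  have hkernel := integral_demeanedWienerKernel_mul_cos_mul ha (sin_nat_mul_pi j) ht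
  simp only [demeanedWienerKernel] at hkernel
  simp only [mul_left_comm _ (√2), integral_const_mul, hkernel]
  field_simp
end

section
/- For every positive integer n and every t ∈ [0,1], the function f(t) = √2·cos(2nπt) is an eigenfunction of the kernel k^τ(s,t) = min(s,t) − (11/10)(s+t) + 2(s²+t²) − (s³+t³) − 3(st²+ts²) + 2(st³+ts³) + (6/5)st + 2/15 with eigenvalue λ = 4n²π², in the sense that f(t) = λ · ∫_0^1 k^τ(s,t)·f(s) ds. (These are the odd-indexed eigenpairs j = 2n−1, λ_j^τ = (j+1)²π², of the Lemma.) -/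
/-!
Write `c = 2nπ`, so that `sin c = 0` and `cos c = 1`. Splitting at `s = t` and using the
elementary antiderivatives gives `∫₀¹ min(s,t) cos(cs) ds = (cos(ct) - 1)/c²`. The rest of
`k^τ(·,t)` is a cubic `a₀ + a₁s + a₂s² + a₃s³` in `s`, whose integral against `cos(cs)` over
`[0,1]` is `(2a₂ + 3a₃)/c²`; for the detrended kernel `a₂ = 2 - 3t` and `a₃ = 2t - 1`, so this
contributes exactly `1/c²`.
Hence `∫₀¹ k^τ(s,t) cos(cs) ds = cos(ct)/c²`.
-/

open Real

namespace DetrendedWiener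

noncomputable def cubicMulCosAntideriv (c a₀ a₁ a₂ a₃ s : ℝ) : ℝ :=
  (a₀ + a₁ * s + a₂ * s ^ 2 + a₃ * s ^ 3) * (sin (c * s) / c)
    + (a₁ + 2 * a₂ * s + 3 * a₃ * s ^ 2) * (cos (c * s) / c ^ 2)
    - (2 * a₂ + 6 * a₃ * s) * (sin (c * s) / c ^ 3)
    - 6 * a₃ * (cos (c * s) / c ^ 4)

theorem hasDerivAt_cubicMulCosAntideriv {c : ℝ} (hc : c ≠ 0) (a₀ a₁ a₂ a₃ s : ℝ) :
    HasDerivAt (cubicMulCosAntideriv c a₀ a₁ a₂ a₃)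
      ((a₀ + a₁ * s + a₂ * s ^ 2 + a₃ * s ^ 3) * cos (c * s)) s := by
  have hlin : HasDerivAt (fun x : ℝ => c * x) c s := by
    simpa using (hasDerivAt_id s).const_mul c
  have hsin := hlin.sin
  have hcos := hlin.cos
  have hp : HasDerivAt (fun x : ℝ => a₀ + a₁ * x + a₂ * x ^ 2 + a₃ * x ^ 3)
      (a₁ + 2 * a₂ * s + 3 * a₃ * s ^ 2) s :=
    ((((hasDerivAt_const s a₀).add ((hasDerivAt_id s).const_mul a₁)).add
      ((hasDerivAt_pow 2 s).const_mul a₂)).add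
      ((hasDerivAt_pow 3 s).const_mul a₃)).congr_deriv (by simp; ring)
  have hq : HasDerivAt (fun x : ℝ => a₁ + 2 * a₂ * x + 3 * a₃ * x ^ 2)
      (2 * a₂ + 6 * a₃ * s) s :=
    (((hasDerivAt_const s a₁).add ((hasDerivAt_id s).const_mul (2 * a₂))).add
      ((hasDerivAt_pow 2 s).const_mul (3 * a₃))).congr_deriv (by simp; ring)
  have hr : HasDerivAt (fun x : ℝ => 2 * a₂ + 6 * a₃ * x) (6 * a₃) s :=
    ((hasDerivAt_const s (2 * a₂)).add
      ((hasDerivAt_id s).const_mul (6 * a₃))).congr_deriv (by simp)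
  exact ((((hp.mul (hsin.div_const c)).add (hq.mul (hcos.div_const (c ^ 2)))).sub
      (hr.mul (hsin.div_const (c ^ 3)))).sub
      ((hasDerivAt_const s (6 * a₃)).mul (hcos.div_const (c ^ 4)))).congr_deriv
    (by field_simp; ring)

theorem integral_cubic_mul_cos {c : ℝ} (hc : c ≠ 0) (a₀ a₁ a₂ a₃ x y : ℝ) :
    ∫ s in x..y, (a₀ + a₁ * s + a₂ * s ^ 2 + a₃ * s ^ 3) * cos (c * s) =
      cubicMulCosAntideriv c a₀ a₁ a₂ a₃ y - cubicMulCosAntideriv c a₀ a₁ a₂ a₃ x :=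
  intervalIntegral.integral_eq_sub_of_hasDerivAt
    (fun s _ => hasDerivAt_cubicMulCosAntideriv hc a₀ a₁ a₂ a₃ s)
    (Continuous.intervalIntegrable (by fun_prop) x y)

theorem integral_zero_one_cubic_mul_cos {c : ℝ} (hc : c ≠ 0) (hsin : sin c = 0)
    (hcos : cos c = 1) (a₀ a₁ a₂ a₃ : ℝ) :
    ∫ s in (0 : ℝ)..1, (a₀ + a₁ * s + a₂ * s ^ 2 + a₃ * s ^ 3) * cos (c * s) =
      (2 * a₂ + 3 * a₃) / c ^ 2 := by
  rw [integral_cubic_mul_cos hc]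
  simp only [cubicMulCosAntideriv, mul_one, mul_zero, hsin, hcos, sin_zero, cos_zero]
  field_simp
  ring

theorem integral_zero_one_min_mul_cos {c : ℝ} (hc : c ≠ 0) (hsin : sin c = 0)
    {t : ℝ} (ht : t ∈ Set.Icc (0 : ℝ) 1) :
    ∫ s in (0 : ℝ)..1, min s t * cos (c * s) = (cos (c * t) - 1) / c ^ 2 := by
  have hcont : Continuous fun s => min s t * cos (c * s) := by fun_prop
  have hleft : ∫ s in (0 : ℝ)..t, min s t * cos (c * s) =
      ∫ s in (0 : ℝ)..t, (0 + 1 * s + 0 * s ^ 2 + 0 * s ^ 3) * cos (c * s) := by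
    refine intervalIntegral.integral_congr fun s hs => ?_
    rw [Set.uIcc_of_le ht.1] at hs
    simp [min_eq_left hs.2]
  have hright : ∫ s in t..1, min s t * cos (c * s) =
      ∫ s in t..1, (t + 0 * s + 0 * s ^ 2 + 0 * s ^ 3) * cos (c * s) := by
    refine intervalIntegral.integral_congr fun s hs => ?_
    rw [Set.uIcc_of_le ht.2] at hs
    simp [min_eq_right hs.1]
  rw [← intervalIntegral.integral_add_adjacent_intervals (hcont.intervalIntegrable 0 t)
      (hcont.intervalIntegrable t 1), hleft, hright, integral_cubic_mul_cos hc,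
    integral_cubic_mul_cos hc]
  simp only [cubicMulCosAntideriv, mul_one, mul_zero, hsin, sin_zero, cos_zero]
  field_simp
  ring

noncomputable def kernel (s t : ℝ) : ℝ :=
  min s t - (11 / 10) * (s + t) + 2 * (s ^ 2 + t ^ 2) - (s ^ 3 + t ^ 3) -
    3 * (s * t ^ 2 + t * s ^ 2) + 2 * (s * t ^ 3 + t * s ^ 3) + (6 / 5) * (s * t) + 2 / 15

theorem kernel_eq_min_add_cubic (s t : ℝ) :
    kernel s t = min s t + ((-(11 / 10) * t + 2 * t ^ 2 - t ^ 3 + 2 / 15)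
      + (-(11 / 10) + (6 / 5) * t - 3 * t ^ 2 + 2 * t ^ 3) * s
      + (2 - 3 * t) * s ^ 2 + (2 * t - 1) * s ^ 3) := by
  unfold kernel
  ring

theorem integral_kernel_mul_cos {c : ℝ} (hc : c ≠ 0) (hsin : sin c = 0) (hcos : cos c = 1)
    {t : ℝ} (ht : t ∈ Set.Icc (0 : ℝ) 1) :
    ∫ s in (0 : ℝ)..1, kernel s t * cos (c * s) = cos (c * t) / c ^ 2 := by
  simp only [kernel_eq_min_add_cubic, add_mul (min _ t)]
  rw [intervalIntegral.integral_add (Continuous.intervalIntegrable (by fun_prop) 0 1)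
      (Continuous.intervalIntegrable (by fun_prop) 0 1),
    integral_zero_one_min_mul_cos hc hsin ht, integral_zero_one_cubic_mul_cos hc hsin hcos]
  field_simp
  ring

end DetrendedWiener

open DetrendedWiener in
theorem detrended_wiener_kernel_eigenfunction_cos (n : ℕ) (hn : 0 < n) (t : ℝ)
    (ht : t ∈ Set.Icc (0 : ℝ) 1) :
    Real.sqrt 2 * Real.cos (2 * (n : ℝ) * Real.pi * t) =
      4 * (n : ℝ) ^ 2 * Real.pi ^ 2 *
        ∫ s in (0 : ℝ)..1,
          (min s t - (11 / 10) * (s + t) + 2 * (s ^ 2 + t ^ 2) - (s ^ 3 + t ^ 3) -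
              3 * (s * t ^ 2 + t * s ^ 2) + 2 * (s * t ^ 3 + t * s ^ 3) +
              (6 / 5) * (s * t) + 2 / 15) *
            (Real.sqrt 2 * Real.cos (2 * (n : ℝ) * Real.pi * s)) := by
  set c := 2 * (n : ℝ) * π
  have hc : c ≠ 0 := by positivity
  have hsin : sin c = 0 := by
    simpa [c, mul_assoc] using sin_nat_mul_pi (2 * n)
  have hcos : cos c = 1 := by
    simpa [c, mul_comm, mul_left_comm, mul_assoc] using cos_nat_mul_two_pi n
  have hintegral := integral_kernel_mul_cos hc hsin hcos ht
  simp only [kernel] at hintegral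
  simp only [mul_left_comm _ (√2), intervalIntegral.integral_const_mul, hintegral]
  field_simp
  ring
end

section
/- Let z > 0 satisfy tan z = z (equivalently, z is a positive root of the Bessel function J_{3/2}, since J_{3/2}(x) is a nonzero multiple of (sin x)/x − cos x). Then for every t ∈ [0,1], the function f(t) = sin(2z(t − 1/2)) is an eigenfunction of the kernel k^τ(s,t) = min(s,t) − (11/10)(s+t) + 2(s²+t²) − (s³+t³) − 3(st²+ts²) + 2(st³+ts³) + (6/5)st + 2/15 with eigenvalue λ = 4z², in the sense that f(t) = λ · ∫_0^1 k^τ(s,t)·f(s) ds. (These are the even-indexed eigenpairs of the Lemma, λ_{2n}^τ = 4 z_{3/2,n}², with eigenfunctions proportional to sin(√λ (t − 1/2)).) -/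
/-!
Split k^τ(s,t) = min(s,t) + q(s,t) with q cubic in s, and put f(s) = sin(2z(s - 1/2)).
Because f'' = -4z² f, splitting the integral at s = t gives
4z² ∫₀¹ min(s,t) f(s) ds = f(t) - f(0) - t f'(1).
Every remaining integral is a cubic times a sine, with an explicit primitive; once sin z = z cos z,
the detrending term 4z² ∫₀¹ q(s,t) f(s) ds equals (2t - 1) z cos z = f(0) + t f'(1), which cancels
the boundary terms exactly.
-/

open Real Set intervalIntegral

noncomputable def cubicMulSinPrimitive (c a a₀ a₁ a₂ a₃ u : ℝ) : ℝ :=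
  -(a₀ + a₁ * u + a₂ * u ^ 2 + a₃ * u ^ 3) * cos (c * (u - a)) / c
    + (a₁ + 2 * a₂ * u + 3 * a₃ * u ^ 2) * sin (c * (u - a)) / c ^ 2
    + (2 * a₂ + 6 * a₃ * u) * cos (c * (u - a)) / c ^ 3
    - 6 * a₃ * sin (c * (u - a)) / c ^ 4

theorem hasDerivAt_cubicMulSinPrimitive {c : ℝ} (hc : c ≠ 0) (a a₀ a₁ a₂ a₃ u : ℝ) :
    HasDerivAt (cubicMulSinPrimitive c a a₀ a₁ a₂ a₃)
      ((a₀ + a₁ * u + a₂ * u ^ 2 + a₃ * u ^ 3) * sin (c * (u - a))) u := by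
  have hθ : HasDerivAt (fun u => c * (u - a)) c u := by
    simpa using ((hasDerivAt_id u).sub_const a).const_mul c
  have hsin := hθ.sin
  have hcos := hθ.cos
  have hp₀ := ((((hasDerivAt_id' u).const_mul a₁).const_add a₀).add
    (((hasDerivAt_pow 2 u).const_mul a₂).add ((hasDerivAt_pow 3 u).const_mul a₃))).neg
  have hp₁ := (((hasDerivAt_id' u).const_mul (2 * a₂)).const_add a₁).add
    ((hasDerivAt_pow 2 u).const_mul (3 * a₃))
  have hp₂ := ((hasDerivAt_id' u).const_mul (6 * a₃)).const_add (2 * a₂)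
  have h := ((((hp₀.mul hcos).div_const c).add ((hp₁.mul hsin).div_const (c ^ 2))).add
    ((hp₂.mul hcos).div_const (c ^ 3))).sub ((hsin.const_mul (6 * a₃)).div_const (c ^ 4))
  refine (h.congr_of_eventuallyEq (.of_forall fun v => ?_)).congr_deriv ?_
  · simp only [cubicMulSinPrimitive, Pi.add_apply, Pi.sub_apply, Pi.mul_apply, Pi.neg_apply]
    ring
  · simp only [Pi.add_apply, Pi.neg_apply]
    field_simp
    ring

theorem integral_cubic_mul_sin {c : ℝ} (hc : c ≠ 0) (a a₀ a₁ a₂ a₃ x y : ℝ) :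
    ∫ u in x..y, (a₀ + a₁ * u + a₂ * u ^ 2 + a₃ * u ^ 3) * sin (c * (u - a)) =
      cubicMulSinPrimitive c a a₀ a₁ a₂ a₃ y - cubicMulSinPrimitive c a a₀ a₁ a₂ a₃ x :=
  integral_eq_sub_of_hasDerivAt (fun u _ => hasDerivAt_cubicMulSinPrimitive hc a a₀ a₁ a₂ a₃ u)
    (Continuous.intervalIntegrable (by fun_prop) x y)

theorem integral_min_mul {g : ℝ → ℝ} (hg : Continuous g) {a b t : ℝ} (ht : t ∈ Icc a b) :
    ∫ s in a..b, min s t * g s = (∫ s in a..t, s * g s) + t * ∫ s in t..b, g s := by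
  have hmin : Continuous fun s => min s t * g s := by fun_prop
  rw [← integral_add_adjacent_intervals (hmin.intervalIntegrable a t)
    (hmin.intervalIntegrable t b), ← integral_const_mul]
  congr 1
  · refine integral_congr fun s hs => ?_
    rw [uIcc_of_le ht.1] at hs
    rw [min_eq_left hs.2]
  · refine integral_congr fun s hs => ?_
    rw [uIcc_of_le ht.2] at hs
    rw [min_eq_right hs.1]

theorem sq_mul_integral_min_mul_sin {c : ℝ} (hc : c ≠ 0) {t : ℝ} (ht : t ∈ Icc (0 : ℝ) 1) :
    c ^ 2 * ∫ s in (0 : ℝ)..1, min s t * sin (c * (s - 1 / 2)) =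
      sin (c * (t - 1 / 2)) + sin (c / 2) - t * c * cos (c / 2) := by
  have hlin : ∫ s in (0 : ℝ)..t, s * sin (c * (s - 1 / 2)) =
      cubicMulSinPrimitive c (1 / 2) 0 1 0 0 t - cubicMulSinPrimitive c (1 / 2) 0 1 0 0 0 := by
    simpa using integral_cubic_mul_sin hc (1 / 2) 0 1 0 0 0 t
  have hconst : ∫ s in t..1, sin (c * (s - 1 / 2)) =
      cubicMulSinPrimitive c (1 / 2) 1 0 0 0 1 - cubicMulSinPrimitive c (1 / 2) 1 0 0 0 t := by
    simpa using integral_cubic_mul_sin hc (1 / 2) 1 0 0 0 t 1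
  rw [integral_min_mul (by fun_prop) ht, hlin, hconst]
  simp only [cubicMulSinPrimitive]
  rw [show c * (0 - 1 / 2) = -(c / 2) by ring, show c * (1 - 1 / 2) = c / 2 by ring, sin_neg,
    cos_neg]
  field_simp
  ring

noncomputable def detrendedWienerKernel (s t : ℝ) : ℝ :=
  min s t - (11 / 10) * (s + t) + 2 * (s ^ 2 + t ^ 2) - (s ^ 3 + t ^ 3) -
    3 * (s * t ^ 2 + t * s ^ 2) + 2 * (s * t ^ 3 + t * s ^ 3) + (6 / 5) * (s * t) + 2 / 15

noncomputable def detrendCorrection (s t : ℝ) : ℝ :=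
  detrendedWienerKernel s t - min s t

theorem sq_mul_integral_detrendCorrection_mul_sin {z : ℝ} (hz : z ≠ 0)
    (hsz : sin z = z * cos z) (t : ℝ) :
    (2 * z) ^ 2 * ∫ s in (0 : ℝ)..1, detrendCorrection s t * sin (2 * z * (s - 1 / 2)) =
      (2 * t - 1) * z * cos z := by
  have hcubic : ∫ s in (0 : ℝ)..1, detrendCorrection s t * sin (2 * z * (s - 1 / 2)) =
      ∫ s in (0 : ℝ)..1, ((-11 / 10 * t + 2 * t ^ 2 - t ^ 3 + 2 / 15) +
        (-11 / 10 + 6 / 5 * t - 3 * t ^ 2 + 2 * t ^ 3) * s + (2 - 3 * t) * s ^ 2 +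
        (-1 + 2 * t) * s ^ 3) * sin (2 * z * (s - 1 / 2)) := by
    congr with s
    simp only [detrendCorrection, detrendedWienerKernel]
    ring
  rw [hcubic, integral_cubic_mul_sin (mul_ne_zero two_ne_zero hz)]
  simp only [cubicMulSinPrimitive]
  rw [show 2 * z * (0 - 1 / 2) = -z by ring, show 2 * z * (1 - 1 / 2) = z by ring, sin_neg,
    cos_neg, hsz]
  field_simp
  ring

theorem sin_eq_mul_cos_of_tan_eq_self {z : ℝ} (hz : z ≠ 0) (hzz : tan z = z) :
    sin z = z * cos z := by
  have hcos : cos z ≠ 0 := fun h => hz (by rw [← hzz, tan_eq_sin_div_cos, h, div_zero])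
  rwa [tan_eq_sin_div_cos, div_eq_iff hcos] at hzz

theorem sq_mul_integral_detrendedWienerKernel_mul_sin {z : ℝ} (hz : z ≠ 0)
    (hsz : sin z = z * cos z) {t : ℝ} (ht : t ∈ Icc (0 : ℝ) 1) :
    (2 * z) ^ 2 * ∫ s in (0 : ℝ)..1, detrendedWienerKernel s t * sin (2 * z * (s - 1 / 2)) =
      sin (2 * z * (t - 1 / 2)) := by
  have hsplit : ∀ s, detrendedWienerKernel s t = min s t + detrendCorrection s t := fun s => by
    rw [detrendCorrection, add_sub_cancel]
  simp_rw [hsplit, add_mul]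
  rw [integral_add (Continuous.intervalIntegrable (by fun_prop) 0 1)
      (Continuous.intervalIntegrable (by unfold detrendCorrection detrendedWienerKernel; fun_prop)
        0 1), mul_add,
    sq_mul_integral_min_mul_sin (mul_ne_zero two_ne_zero hz) ht,
    sq_mul_integral_detrendCorrection_mul_sin hz hsz, mul_div_cancel_left₀ z two_ne_zero, hsz]
  ring

theorem detrended_wiener_kernel_eigenfunction_sin (z : ℝ) (hz : 0 < z)
    (hzz : Real.tan z = z) (t : ℝ) (ht : t ∈ Set.Icc (0 : ℝ) 1) :
    Real.sin (2 * z * (t - 1 / 2)) =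
      4 * z ^ 2 *
        ∫ s in (0 : ℝ)..1,
          (min s t - (11 / 10) * (s + t) + 2 * (s ^ 2 + t ^ 2) - (s ^ 3 + t ^ 3) -
              3 * (s * t ^ 2 + t * s ^ 2) + 2 * (s * t ^ 3 + t * s ^ 3) +
              (6 / 5) * (s * t) + 2 / 15) *
            Real.sin (2 * z * (s - 1 / 2)) := by
  show _ = 4 * z ^ 2 * ∫ s in (0 : ℝ)..1, detrendedWienerKernel s t * sin (2 * z * (s - 1 / 2))
  have hsz := sin_eq_mul_cos_of_tan_eq_self hz.ne' hzz
  rw [show (4 : ℝ) * z ^ 2 = (2 * z) ^ 2 by ring,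
    sq_mul_integral_detrendedWienerKernel_mul_sin hz.ne' hsz ht]
end

section
/- For all s, t ∈ [0,1], writing h(u,v) = min(u,v): h(s,t) + (6s−4)∫_0^1 h(u,t) du + (6−12s)∫_0^1 u·h(u,t) du + (6t−4)∫_0^1 h(s,v) dv + (6−12t)∫_0^1 v·h(s,v) dv + (6s−4)(6t−4)∫_0^1∫_0^1 h(u,v) du dv + (6s−4)(6−12t)∫_0^1∫_0^1 v·h(u,v) du dv + (6−12s)(6t−4)∫_0^1∫_0^1 u·h(u,v) du dv + (6−12s)(6−12t)∫_0^1∫_0^1 u·v·h(u,v) du dv = min(s,t) − (11/10)(s+t) + 2(s²+t²) − (s³+t³) − 3(st²+ts²) + 2(st³+ts³) + (6/5)st + 2/15. -/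
open intervalIntegral

lemma int_min (t : ℝ) (ht : t ∈ Set.Icc (0:ℝ) 1) :
    (∫ u in (0:ℝ)..1, min u t) = t - t^2/2 := by
  obtain ⟨h0, h1⟩ := ht
  rw [← intervalIntegral.integral_add_adjacent_intervals (a:=(0:ℝ)) (b:=t) (c:=1)
    (f := fun u => min u t)
    ((continuous_id.min continuous_const).intervalIntegrable _ _)
    ((continuous_id.min continuous_const).intervalIntegrable _ _)]
  have e1 : (∫ u in (0:ℝ)..t, min u t) = ∫ u in (0:ℝ)..t, u := by
    apply intervalIntegral.integral_congr
    intro u hu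
    rw [Set.uIcc_of_le h0] at hu
    exact min_eq_left hu.2
  have e2 : (∫ u in t..(1:ℝ), min u t) = ∫ u in t..(1:ℝ), t := by
    apply intervalIntegral.integral_congr
    intro u hu
    rw [Set.uIcc_of_le h1] at hu
    exact min_eq_right hu.1
  rw [e1, e2]
  simp [integral_id]
  ring

lemma int_umin (t : ℝ) (ht : t ∈ Set.Icc (0:ℝ) 1) :
    (∫ u in (0:ℝ)..1, u * min u t) = t/2 - t^3/6 := by
  obtain ⟨h0, h1⟩ := ht
  rw [← intervalIntegral.integral_add_adjacent_intervals (a:=(0:ℝ)) (b:=t) (c:=1)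
    (f := fun u => u * min u t)
    ((continuous_id.mul (continuous_id.min continuous_const)).intervalIntegrable _ _)
    ((continuous_id.mul (continuous_id.min continuous_const)).intervalIntegrable _ _)]
  have e1 : (∫ u in (0:ℝ)..t, u * min u t) = ∫ u in (0:ℝ)..t, u^2 := by
    apply intervalIntegral.integral_congr
    intro u hu
    rw [Set.uIcc_of_le h0] at hu
    show u * min u t = u ^ 2
    rw [min_eq_left hu.2]; ring
  have e2 : (∫ u in t..(1:ℝ), u * min u t) = ∫ u in t..(1:ℝ), u * t := by
    apply intervalIntegral.integral_congr
    intro u hu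
    rw [Set.uIcc_of_le h1] at hu
    show u * min u t = u * t
    rw [min_eq_right hu.1]
  rw [e1, e2, integral_pow, intervalIntegral.integral_mul_const, integral_id]
  ring

lemma dbl1 : (∫ u in (0:ℝ)..1, ∫ v in (0:ℝ)..1, min u v) = 1/3 := by
  have e : (∫ u in (0:ℝ)..1, ∫ v in (0:ℝ)..1, min u v)
      = ∫ u in (0:ℝ)..1, (u - u^2/2) := by
    apply intervalIntegral.integral_congr
    intro u hu
    rw [Set.uIcc_of_le (by norm_num : (0:ℝ) ≤ 1)] at hu
    simp only [min_comm u]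
    exact int_min u hu
  rw [e, intervalIntegral.integral_sub ((Continuous.intervalIntegrable (by continuity) _ _))
    (((continuous_pow 2).div_const 2).intervalIntegrable _ _)]
  simp [integral_id, intervalIntegral.integral_div, integral_pow]
  norm_num

lemma dbl2 : (∫ u in (0:ℝ)..1, ∫ v in (0:ℝ)..1, v * min u v) = 5/24 := by
  have e : (∫ u in (0:ℝ)..1, ∫ v in (0:ℝ)..1, v * min u v)
      = ∫ u in (0:ℝ)..1, (u/2 - u^3/6) := by
    apply intervalIntegral.integral_congr
    intro u hu
    rw [Set.uIcc_of_le (by norm_num : (0:ℝ) ≤ 1)] at hu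
    simp only [min_comm u]
    exact int_umin u hu
  rw [e, intervalIntegral.integral_sub ((Continuous.intervalIntegrable (by continuity) _ _))
    (((continuous_pow 3).div_const 6).intervalIntegrable _ _)]
  simp [integral_id, intervalIntegral.integral_div, integral_pow]
  norm_num

lemma dbl3 : (∫ u in (0:ℝ)..1, ∫ v in (0:ℝ)..1, u * min u v) = 5/24 := by
  have e : (∫ u in (0:ℝ)..1, ∫ v in (0:ℝ)..1, u * min u v)
      = ∫ u in (0:ℝ)..1, (u^2 - u^3/2) := by
    apply intervalIntegral.integral_congr
    intro u hu
    rw [Set.uIcc_of_le (by norm_num : (0:ℝ) ≤ 1)] at hu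
    show (∫ v in (0:ℝ)..1, u * min u v) = u^2 - u^3/2
    have : (∫ v in (0:ℝ)..1, u * min u v) = u * ∫ v in (0:ℝ)..1, min v u := by
      rw [← intervalIntegral.integral_const_mul]
      simp only [min_comm u]
    rw [this, int_min u hu]; ring
  rw [e, intervalIntegral.integral_sub ((continuous_pow 2).intervalIntegrable _ _)
    (((continuous_pow 3).div_const 2).intervalIntegrable _ _)]
  simp [intervalIntegral.integral_div, integral_pow]
  norm_num

lemma dbl4 : (∫ u in (0:ℝ)..1, ∫ v in (0:ℝ)..1, u * v * min u v) = 2/15 := by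
  have e : (∫ u in (0:ℝ)..1, ∫ v in (0:ℝ)..1, u * v * min u v)
      = ∫ u in (0:ℝ)..1, (u^2/2 - u^4/6) := by
    apply intervalIntegral.integral_congr
    intro u hu
    rw [Set.uIcc_of_le (by norm_num : (0:ℝ) ≤ 1)] at hu
    show (∫ v in (0:ℝ)..1, u * v * min u v) = u^2/2 - u^4/6
    have : (∫ v in (0:ℝ)..1, u * v * min u v) = u * ∫ v in (0:ℝ)..1, v * min v u := by
      rw [← intervalIntegral.integral_const_mul]
      simp only [min_comm u]
      congr 1; funext v; ring
    rw [this, int_umin u hu]; ring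
  rw [e, intervalIntegral.integral_sub (((continuous_pow 2).div_const 2).intervalIntegrable _ _)
    (((continuous_pow 4).div_const 6).intervalIntegrable _ _)]
  simp [intervalIntegral.integral_div, integral_pow]
  norm_num

theorem detrended_wiener_kernel_formula (s t : ℝ) (hs : s ∈ Set.Icc (0 : ℝ) 1)
    (ht : t ∈ Set.Icc (0 : ℝ) 1) :
    min s t + (6 * s - 4) * (∫ u in (0 : ℝ)..1, min u t) +
        (6 - 12 * s) * (∫ u in (0 : ℝ)..1, u * min u t) +
        (6 * t - 4) * (∫ v in (0 : ℝ)..1, min s v) +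
        (6 - 12 * t) * (∫ v in (0 : ℝ)..1, v * min s v) +
        (6 * s - 4) * (6 * t - 4) * (∫ u in (0 : ℝ)..1, ∫ v in (0 : ℝ)..1, min u v) +
        (6 * s - 4) * (6 - 12 * t) * (∫ u in (0 : ℝ)..1, ∫ v in (0 : ℝ)..1, v * min u v) +
        (6 - 12 * s) * (6 * t - 4) * (∫ u in (0 : ℝ)..1, ∫ v in (0 : ℝ)..1, u * min u v) +
        (6 - 12 * s) * (6 - 12 * t) *
          (∫ u in (0 : ℝ)..1, ∫ v in (0 : ℝ)..1, u * v * min u v) =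
      min s t - (11 / 10) * (s + t) + 2 * (s ^ 2 + t ^ 2) - (s ^ 3 + t ^ 3) -
        3 * (s * t ^ 2 + t * s ^ 2) + 2 * (s * t ^ 3 + t * s ^ 3) +
        (6 / 5) * (s * t) + 2 / 15 := by
  have h1 : (∫ v in (0:ℝ)..1, min s v) = s - s^2/2 := by
    simp only [min_comm s]; exact int_min s hs
  have h2 : (∫ v in (0:ℝ)..1, v * min s v) = s/2 - s^3/6 := by
    simp only [min_comm s]; exact int_umin s hs
  rw [int_min t ht, int_umin t ht, h1, h2, dbl1, dbl2, dbl3, dbl4]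
  ring
end

section
/- For every t ∈ [0,1]: t = 8·∑_{j=1}^{∞} sin²((j − 1/2)πt) / ((2j−1)²π²). -/
/-!
Evaluate the Fourier series `∑ cos (2π n x) / n² = π² B₂(x)` of the second Bernoulli polynomial
on `[0, 1]` at `x = t / 2` and subtract its even-frequency part, the same series at `x = t`
divided by 4: this gives `∑ cos ((2j+1) π t) / (2j+1)² = π² (1 - 2t) / 8`. Since
`sin² ((j + 1/2) π t) = (1 - cos ((2j+1) π t)) / 2`, the series of the theorem is half the
difference of the values at `0` and at `t`, i.e. `π² t / 8`.
-/

open Real Set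

theorem HasSum.odd_of_even {G : Type*} [AddCommGroup G] [UniformSpace G] [IsUniformAddGroup G]
    [CompleteSpace G] [T2Space G] {f : ℕ → G} {a b : G} (hf : HasSum f a)
    (he : HasSum (fun k ↦ f (2 * k)) b) : HasSum (fun k ↦ f (2 * k + 1)) (a - b) := by
  have hodd : Summable fun k ↦ f (2 * k + 1) :=
    hf.summable.comp_injective <| (add_left_injective 1).comp (mul_right_injective₀ two_ne_zero)
  rw [hf.unique (he.even_add_odd hodd.hasSum), add_sub_cancel_left]
  exact hodd.hasSum

theorem hasSum_cos_mul_div_sq {x : ℝ} (hx : x ∈ Icc (0 : ℝ) 1) :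
    HasSum (fun n : ℕ ↦ cos (2 * π * n * x) / n ^ 2) (π ^ 2 * (x ^ 2 - x + 6⁻¹)) := by
  have h := hasSum_one_div_nat_pow_mul_cos one_ne_zero hx
  rw [← bernoulliFun] at h
  simp only [Nat.reduceMul, bernoulliFun_two] at h
  rw [show (-1 : ℝ) ^ (1 + 1) * (2 * π) ^ 2 / 2 / (Nat.factorial 2 : ℕ) = π ^ 2 by
    norm_num [Nat.factorial]; ring] at h
  exact h.congr_fun fun n ↦ (one_div_mul_eq_div _ _).symm

theorem hasSum_cos_odd_mul_div_sq {t : ℝ} (ht : t ∈ Icc (0 : ℝ) 1) :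
    HasSum (fun j : ℕ ↦ cos ((2 * j + 1) * π * t) / (2 * j + 1) ^ 2)
      (π ^ 2 * (1 - 2 * t) / 8) := by
  have hall := hasSum_cos_mul_div_sq (x := t / 2) ⟨by linarith [ht.1], by linarith [ht.2]⟩
  have heven := (hasSum_cos_mul_div_sq ht).div_const 4
  have hodd := hall.odd_of_even (heven.congr_fun fun k ↦ by push_cast; ring_nf)
  rw [show π ^ 2 * ((t / 2) ^ 2 - t / 2 + 6⁻¹) - π ^ 2 * (t ^ 2 - t + 6⁻¹) / 4 =
    π ^ 2 * (1 - 2 * t) / 8 by ring] at hodd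
  exact hodd.congr_fun fun j ↦ by push_cast; ring_nf

theorem hasSum_sin_sq_odd_mul_div_sq {t : ℝ} (ht : t ∈ Icc (0 : ℝ) 1) :
    HasSum (fun j : ℕ ↦ sin ((j + 1 / 2) * π * t) ^ 2 / (2 * j + 1) ^ 2) (π ^ 2 * t / 8) := by
  have hzero := hasSum_cos_odd_mul_div_sq (left_mem_Icc.mpr zero_le_one)
  have h := (hzero.sub (hasSum_cos_odd_mul_div_sq ht)).div_const 2
  rw [show (π ^ 2 * (1 - 2 * 0) / 8 - π ^ 2 * (1 - 2 * t) / 8) / 2 = π ^ 2 * t / 8 by ring] at h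
  refine h.congr_fun fun j ↦ ?_
  rw [sin_sq_eq_half_sub, mul_zero, cos_zero]
  ring_nf

theorem wiener_mercer_diagonal (t : ℝ) (ht : t ∈ Set.Icc (0 : ℝ) 1) :
    t = 8 * ∑' j : ℕ,
      Real.sin (((j : ℝ) + 1 / 2) * Real.pi * t) ^ 2 /
        ((2 * (j : ℝ) + 1) ^ 2 * Real.pi ^ 2) := by
  have hsum := (hasSum_sin_sq_odd_mul_div_sq ht).div_const (π ^ 2)
  simp only [div_div] at hsum
  rw [hsum.tsum_eq]
  field_simp
end
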